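/- arXiv:2505.15602 — 2 statements merged into one kernel-verified Lean document; each statement's English description precedes it below -/
import Mathlib

section
/- Let c₁, c₂ > 0, ζ ≥ 0, Λ₂ ≥ 0 and T > 0. The ordinary differential equation h'(t) = h(t)² / (2c₁ + h(t) ζ Λ₂) on [0,T] with terminal condition h(T) = 2c₂ admits a unique solution, and this solution satisfies h(t) > 0 for all t ∈ [0,T], and h is nondecreasing on [0,T]. -/
/-!
With `a = 2c₁` and `K = ζΛ₂`, the function `G y = K log y - a / y` is an antiderivative of
`(a + yK) / y²`, the reciprocal of the vector field, so `G (h t) - t` is constant along every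
positive solution. On `(0, ∞)`, `G` is strictly increasing, tends to `-∞` at `0⁺` and takes every
value below `K log (2c₂)`; hence `h t = G⁻¹ (t - T + G (2c₂))` is a solution on `(-∞, T]`, by the
inverse function theorem. A solution with `h T > 0` can never reach `0` on `[0, T]`, because there
`G (h t)` stays bounded below while `G → -∞` at `0⁺`; the conserved quantity then determines it,
which gives uniqueness and monotonicity.
-/

open Set Filter Topology Function

noncomputable section

def riccatiPotential (a K y : ℝ) : ℝ := K * Real.log y - a / y

def IsRiccatiSolution (a K : ℝ) (h : ℝ → ℝ) (s u : ℝ) : Prop :=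
  ∀ t ∈ Icc s u, HasDerivWithinAt h (h t ^ 2 / (a + h t * K)) (Icc s u) t

/-- The solution with `h u = y₀`; it is a genuine solution only for `t < u + a / y₀`, beyond which
`invFunOn` returns junk values. -/
def riccatiSolution (a K u y₀ t : ℝ) : ℝ :=
  invFunOn (riccatiPotential a K) (Ioi 0) (t + (riccatiPotential a K y₀ - u))

end

theorem StrictMonoOn.continuousAt_invFunOn {α β : Type*} [LinearOrder α] [TopologicalSpace α]
    [OrderTopology α] [DenselyOrdered α] [Nonempty α] [LinearOrder β] [TopologicalSpace β]
    [OrderTopology β] {f : α → β} {s : Set α} {x : β} (hf : StrictMonoOn f s) (hs : IsOpen s)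
    (hx : f '' s ∈ 𝓝 x) : ContinuousAt (invFunOn f s) x := by
  have hinv : ∀ y ∈ f '' s, invFunOn f s y ∈ s ∧ f (invFunOn f s y) = y :=
    fun y hy => ⟨invFunOn_mem hy, invFunOn_eq hy⟩
  have hmono : MonotoneOn (invFunOn f s) (f '' s) := fun y hy y' hy' hyy' =>
    (hf.le_iff_le (hinv y hy).1 (hinv y' hy').1).1 (by rwa [(hinv y hy).2, (hinv y' hy').2])
  refine continuousAt_of_monotoneOn_of_image_mem_nhds hmono hx ?_
  rw [hf.injOn.leftInvOn_invFunOn.image_image]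
  exact hs.mem_nhds (hinv x (mem_of_mem_nhds hx)).1

theorem StrictMonoOn.hasDerivAt_invFunOn {f : ℝ → ℝ} {s : Set ℝ} {f' x : ℝ}
    (hf : StrictMonoOn f s) (hs : IsOpen s) (hx : f '' s ∈ 𝓝 x)
    (hf' : HasDerivAt f f' (invFunOn f s x)) (hf'0 : f' ≠ 0) :
    HasDerivAt (invFunOn f s) f'⁻¹ x :=
  hf'.of_local_left_inverse (hf.continuousAt_invFunOn hs hx) hf'0
    (eventually_of_mem hx fun _ hy => invFunOn_eq hy)

section Potential

variable {a K : ℝ}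

theorem hasDerivAt_riccatiPotential {y : ℝ} (hy : 0 < y) :
    HasDerivAt (riccatiPotential a K) ((a + y * K) / y ^ 2) y := by
  have e : (a + y * K) / y ^ 2 = K * y⁻¹ - a * -(y ^ 2)⁻¹ := by
    field_simp
    ring
  rw [e]
  exact ((Real.hasDerivAt_log hy.ne').const_mul K).fun_sub ((hasDerivAt_inv hy.ne').const_mul a)

theorem continuousOn_riccatiPotential : ContinuousOn (riccatiPotential a K) (Ioi 0) :=
  fun _ hy => (hasDerivAt_riccatiPotential hy).continuousAt.continuousWithinAt

theorem strictMonoOn_riccatiPotential (ha : 0 < a) (hK : 0 ≤ K) :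
    StrictMonoOn (riccatiPotential a K) (Ioi 0) := by
  refine strictMonoOn_of_deriv_pos (convex_Ioi 0) continuousOn_riccatiPotential fun y hy => ?_
  rw [interior_Ioi, mem_Ioi] at hy
  rw [(hasDerivAt_riccatiPotential hy).deriv]
  positivity

theorem tendsto_riccatiPotential_nhdsGT_zero (ha : 0 < a) (hK : 0 ≤ K) :
    Tendsto (riccatiPotential a K) (𝓝[>] 0) atBot := by
  have hlog : ∀ᶠ y in 𝓝[>] (0 : ℝ), K * Real.log y ≤ 0 := by
    filter_upwards [Ioo_mem_nhdsGT one_pos] with y hy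
    exact mul_nonpos_of_nonneg_of_nonpos hK (Real.log_nonpos hy.1.le hy.2.le)
  have hinv : Tendsto (fun y : ℝ => -(a / y)) (𝓝[>] 0) atBot := by
    simpa only [div_eq_mul_inv, comp_def] using
      tendsto_neg_atTop_atBot.comp (tendsto_inv_nhdsGT_zero.const_mul_atTop ha)
  exact (tendsto_atBot_add_left_of_ge' _ 0 hlog hinv).congr fun y => (sub_eq_add_neg _ _).symm

theorem Iio_subset_image_riccatiPotential (ha : 0 < a) (hK : 0 ≤ K) {y₀ : ℝ} (hy₀ : 0 < y₀) :
    Iio (K * Real.log y₀) ⊆ riccatiPotential a K '' Ioi 0 := by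
  intro b hb
  obtain ⟨z, hzb, hz⟩ := (((tendsto_riccatiPotential_nhdsGT_zero ha hK).eventually
    (eventually_le_atBot b)).and self_mem_nhdsWithin).exists
  have hlim : Tendsto (fun y => K * Real.log y₀ - a / y) atTop (𝓝 (K * Real.log y₀)) := by
    simpa only [sub_zero, id] using
      tendsto_const_nhds.sub ((tendsto_const_nhds (x := a)).div_atTop tendsto_id)
  obtain ⟨y, hby, hy⟩ := ((hlim.eventually (lt_mem_nhds hb)).and (eventually_ge_atTop y₀)).exists
  have hGy : b ≤ riccatiPotential a K y := by
    have : K * Real.log y₀ ≤ K * Real.log y := by gcongr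
    unfold riccatiPotential
    linarith
  exact (isPreconnected_Ioi (a := (0 : ℝ))).intermediate_value hz (hy₀.trans_le hy)
    continuousOn_riccatiPotential ⟨hzb, hGy⟩

end Potential

section Solution

variable {a K u y₀ t : ℝ}

theorem riccatiPotential_image_mem_nhds (ha : 0 < a) (hK : 0 ≤ K) (hy₀ : 0 < y₀)
    (ht : t < u + a / y₀) :
    riccatiPotential a K '' Ioi 0 ∈ 𝓝 (t + (riccatiPotential a K y₀ - u)) := by
  refine mem_of_superset (Iio_mem_nhds ?_) (Iio_subset_image_riccatiPotential ha hK hy₀)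
  unfold riccatiPotential
  linarith

theorem riccatiSolution_pos (ha : 0 < a) (hK : 0 ≤ K) (hy₀ : 0 < y₀) (ht : t < u + a / y₀) :
    0 < riccatiSolution a K u y₀ t :=
  have hmem := mem_of_mem_nhds (riccatiPotential_image_mem_nhds ha hK hy₀ ht)
  invFunOn_mem hmem

theorem riccatiPotential_riccatiSolution (ha : 0 < a) (hK : 0 ≤ K) (hy₀ : 0 < y₀)
    (ht : t < u + a / y₀) :
    riccatiPotential a K (riccatiSolution a K u y₀ t) = t + (riccatiPotential a K y₀ - u) :=
  have hmem := mem_of_mem_nhds (riccatiPotential_image_mem_nhds ha hK hy₀ ht)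
  invFunOn_eq hmem

theorem riccatiSolution_self (ha : 0 < a) (hK : 0 ≤ K) (hy₀ : 0 < y₀) :
    riccatiSolution a K u y₀ u = y₀ := by
  have hu : u < u + a / y₀ := lt_add_of_pos_right u (div_pos ha hy₀)
  refine (strictMonoOn_riccatiPotential ha hK).injOn (riccatiSolution_pos ha hK hy₀ hu) hy₀ ?_
  rw [riccatiPotential_riccatiSolution ha hK hy₀ hu]
  ring

theorem hasDerivAt_riccatiSolution (ha : 0 < a) (hK : 0 ≤ K) (hy₀ : 0 < y₀)
    (ht : t < u + a / y₀) :
    HasDerivAt (riccatiSolution a K u y₀)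
      (riccatiSolution a K u y₀ t ^ 2 / (a + riccatiSolution a K u y₀ t * K)) t := by
  have hpos := riccatiSolution_pos ha hK hy₀ ht
  have hinv := (strictMonoOn_riccatiPotential ha hK).hasDerivAt_invFunOn isOpen_Ioi
    (riccatiPotential_image_mem_nhds ha hK hy₀ ht) (hasDerivAt_riccatiPotential hpos)
    (by positivity)
  rw [inv_div] at hinv
  exact hinv.comp_add_const t _

theorem isRiccatiSolution_riccatiSolution (ha : 0 < a) (hK : 0 ≤ K) (hy₀ : 0 < y₀) (s : ℝ) :
    IsRiccatiSolution a K (riccatiSolution a K u y₀) s u := fun _ ht =>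
  (hasDerivAt_riccatiSolution ha hK hy₀
    (lt_add_of_le_of_pos ht.2 (div_pos ha hy₀))).hasDerivWithinAt

end Solution

namespace IsRiccatiSolution

variable {a K s u : ℝ} {h : ℝ → ℝ}

theorem mono_left (hsol : IsRiccatiSolution a K h s u) {s' : ℝ} (hs : s ≤ s') :
    IsRiccatiSolution a K h s' u := fun t ht =>
  (hsol t ⟨hs.trans ht.1, ht.2⟩).mono (Icc_subset_Icc_left hs)

theorem continuousOn (hsol : IsRiccatiSolution a K h s u) : ContinuousOn h (Icc s u) :=
  fun t ht => (hsol t ht).continuousWithinAt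

theorem riccatiPotential_sub_eq (hsol : IsRiccatiSolution a K h s u) (ha : 0 < a) (hK : 0 ≤ K)
    (hpos : ∀ t ∈ Icc s u, 0 < h t) :
    ∀ t ∈ Icc s u, riccatiPotential a K (h t) - t = riccatiPotential a K (h s) - s := by
  have hderiv : ∀ t ∈ Icc s u,
      HasDerivWithinAt (fun t => riccatiPotential a K (h t) - t) 0 (Icc s u) t := by
    intro t ht
    have hht := hpos t ht
    have hden : 0 < a + h t * K := by positivity
    have hone : (a + h t * K) / h t ^ 2 * (h t ^ 2 / (a + h t * K)) - 1 = 0 := by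
      field_simp
      ring
    rw [← hone]
    exact ((hasDerivAt_riccatiPotential hht).comp_hasDerivWithinAt t (hsol t ht)).sub
      (hasDerivWithinAt_id t _)
  intro t ht
  simpa only [zero_mul, norm_le_zero_iff, sub_eq_zero] using
    norm_image_sub_le_of_norm_deriv_le_segment' hderiv (fun _ _ => norm_zero.le) t ht

theorem pos (hsol : IsRiccatiSolution a K h s u) (ha : 0 < a) (hK : 0 ≤ K) (hu : 0 < h u) :
    ∀ t ∈ Icc s u, 0 < h t := by
  by_contra! ⟨t₁, ht₁, ht₁0⟩
  -- `G z` lies below every value `G (h t) = t - u + G (h u)` that the conservation law allows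
  obtain ⟨z, hGz, hz⟩ := (((tendsto_riccatiPotential_nhdsGT_zero ha hK).eventually
    (eventually_lt_atBot (s - u + riccatiPotential a K (h u)))).and self_mem_nhdsWithin).exists
  have hzu : z < h u := ((strictMonoOn_riccatiPotential ha hK).lt_iff_lt hz hu).1 (by
    linarith [ht₁.1.trans ht₁.2])
  let S := {t ∈ Icc s u | h t ≤ z}
  have hS : IsCompact S := isCompact_Icc.of_isClosed_subset
    (hsol.continuousOn.preimage_isClosed_of_isClosed isClosed_Icc isClosed_Iic) (sep_subset _ _)
  have ht₀ : sSup S ∈ S := hS.sSup_mem ⟨t₁, ht₁, ht₁0.trans hz.le⟩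
  obtain ⟨t₂, ht₂, hzt₂⟩ := intermediate_value_Icc ht₀.1.2
    (hsol.continuousOn.mono (Icc_subset_Icc_left ht₀.1.1)) ⟨ht₀.2, hzu.le⟩
  have hst₂ : s ≤ t₂ := ht₀.1.1.trans ht₂.1
  have hpos : ∀ t ∈ Icc t₂ u, 0 < h t := by
    intro t ht
    rcases ht.1.eq_or_lt with rfl | hlt
    · rw [hzt₂]; exact hz
    · refine hz.trans (not_le.1 fun hle => ?_)
      have := le_csSup hS.bddAbove ⟨⟨hst₂.trans ht.1, ht.2⟩, hle⟩
      linarith [ht₂.1]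
  have hcons := (hsol.mono_left hst₂).riccatiPotential_sub_eq ha hK hpos u (right_mem_Icc.2 ht₂.2)
  rw [hzt₂] at hcons
  linarith

theorem monotoneOn (hsol : IsRiccatiSolution a K h s u) (ha : 0 < a) (hK : 0 ≤ K) (hu : 0 < h u) :
    MonotoneOn h (Icc s u) := by
  have hpos := hsol.pos ha hK hu
  have hcons := hsol.riccatiPotential_sub_eq ha hK hpos
  intro t ht t' ht' htt'
  exact ((strictMonoOn_riccatiPotential ha hK).le_iff_le (hpos t ht) (hpos t' ht')).1
    (by linarith [hcons t ht, hcons t' ht'])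

theorem eqOn {h₂ : ℝ → ℝ} (hsol : IsRiccatiSolution a K h s u)
    (hsol₂ : IsRiccatiSolution a K h₂ s u) (ha : 0 < a) (hK : 0 ≤ K) (hu : 0 < h u)
    (heq : h u = h₂ u) : EqOn h h₂ (Icc s u) := by
  intro t ht
  have hmem : u ∈ Icc s u := right_mem_Icc.2 (ht.1.trans ht.2)
  have hpos := hsol.pos ha hK hu
  have hpos₂ := hsol₂.pos ha hK (heq ▸ hu)
  have hcons := hsol.riccatiPotential_sub_eq ha hK hpos
  have hcons₂ := hsol₂.riccatiPotential_sub_eq ha hK hpos₂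
  refine (strictMonoOn_riccatiPotential ha hK).injOn (hpos t ht) (hpos₂ t ht) ?_
  linarith [hcons t ht, hcons u hmem, hcons₂ t ht, hcons₂ u hmem,
    congrArg (riccatiPotential a K) heq]

end IsRiccatiSolution

theorem stmt_3_general (c₁ c₂ ζ Λ₂ T : ℝ) (hc₁ : 0 < c₁) (hc₂ : 0 < c₂) (hζ : 0 ≤ ζ)
    (hΛ₂ : 0 ≤ Λ₂) :
    ∃ h : ℝ → ℝ,
      (∀ t ∈ Icc (0 : ℝ) T,
          HasDerivWithinAt h (h t ^ 2 / (2 * c₁ + h t * ζ * Λ₂)) (Icc 0 T) t)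
      ∧ h T = 2 * c₂
      ∧ (∀ t ∈ Icc (0 : ℝ) T, 0 < h t)
      ∧ MonotoneOn h (Icc 0 T)
      ∧ ∀ h₂ : ℝ → ℝ,
          (∀ t ∈ Icc (0 : ℝ) T,
              HasDerivWithinAt h₂ (h₂ t ^ 2 / (2 * c₁ + h₂ t * ζ * Λ₂)) (Icc 0 T) t) →
          h₂ T = 2 * c₂ → ∀ t ∈ Icc (0 : ℝ) T, h₂ t = h t := by
  have ha : 0 < 2 * c₁ := by positivity
  have hK : 0 ≤ ζ * Λ₂ := mul_nonneg hζ hΛ₂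
  have hy₀ : 0 < 2 * c₂ := by positivity
  set h := riccatiSolution (2 * c₁) (ζ * Λ₂) T (2 * c₂)
  have hsol : IsRiccatiSolution (2 * c₁) (ζ * Λ₂) h 0 T :=
    isRiccatiSolution_riccatiSolution ha hK hy₀ 0
  have hT : h T = 2 * c₂ := riccatiSolution_self ha hK hy₀
  have hTpos : 0 < h T := hT ▸ hy₀
  simp only [mul_assoc]
  exact ⟨h, hsol, hT, hsol.pos ha hK hTpos, hsol.monotoneOn ha hK hTpos,
    fun h₂ hsol₂ h₂T => (hsol.eqOn hsol₂ ha hK hTpos (hT.trans h₂T.symm)).symm⟩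

/-- Well-posedness of the Riccati-type ODE h' = h²/(2c₁ + hζΛ₂) on [0,T] with terminal
condition h(T) = 2c₂: existence, uniqueness, positivity and monotonicity. -/
theorem stmt_3 (c₁ c₂ ζ Λ₂ T : ℝ) (hc₁ : 0 < c₁) (hc₂ : 0 < c₂) (hζ : 0 ≤ ζ)
    (hΛ₂ : 0 ≤ Λ₂) (hT : 0 < T) :
    ∃ h : ℝ → ℝ,
      (∀ t ∈ Icc (0 : ℝ) T,
          HasDerivWithinAt h (h t ^ 2 / (2 * c₁ + h t * ζ * Λ₂)) (Icc 0 T) t)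
      ∧ h T = 2 * c₂
      ∧ (∀ t ∈ Icc (0 : ℝ) T, 0 < h t)
      ∧ MonotoneOn h (Icc 0 T)
      ∧ ∀ h₂ : ℝ → ℝ,
          (∀ t ∈ Icc (0 : ℝ) T,
              HasDerivWithinAt h₂ (h₂ t ^ 2 / (2 * c₁ + h₂ t * ζ * Λ₂)) (Icc 0 T) t) →
          h₂ T = 2 * c₂ → ∀ t ∈ Icc (0 : ℝ) T, h₂ t = h t :=
  stmt_3_general c₁ c₂ ζ Λ₂ T hc₁ hc₂ hζ hΛ₂
end

section
/- Let T > 0, c₁, c₂ > 0, ζ, Λ₁ ≥ 0, Λ₂ ≥ 0, let Σ be a d×d matrix, and suppose h : [0,T] → (0,∞) is C¹ and solves h'(t) = h(t)²/(2c₁ + h(t)ζΛ₂) with h(T) = 2c₂. Define f(t) = (1/2)(Tr[ΣΣᵀ] + Λ₁ζ) ∫_t^T h(s) ds and V(t,x) = (1/2)h(t)‖x‖² + f(t). Then V satisfies the HJB equation 0 = ∂_t V(t,x) + (1/2)Tr[ΣΣᵀ∇²_x V(t,x)] + inf_{a∈ℝ^d} { c₁‖a‖² + (Λ₁ + Λ₂‖a‖²)(h(t)/2)ζ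 + aᵀ∇_x V(t,x) } − Λ₁(h(t)/2)ζ·0, i.e. 0 = ∂_t V + (1/2)Tr[ΣΣᵀ∇²_x V] + inf_a { c₁‖a‖² + (Λ₁ + Λ₂‖a‖²)(h(t)ζ/2) + aᵀ h(t)x }, for all (t,x) ∈ [0,T) × ℝ^d, together with the terminal condition V(T,x) = c₂‖x‖². -/
/-! Since `V t` is a multiple of `‖x‖²` plus a constant, its gradient is `h t • x` and its Hessian
is `h t` times the identity, so the diffusion term is `h t · Tr[ΣΣᵀ] / 2`. The Hamiltonian is a
quadratic `k‖a‖² + ⟪a, v⟫ + m` in the control with `k = c₁ + Λ₂ h ζ / 2 > 0`; completing the square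
gives the infimum `m - ‖v‖² / (4k)`. The Riccati equation for `h` cancels the `‖x‖²` terms, and
`f' = -(Tr[ΣΣᵀ] + Λ₁ ζ) h / 2` cancels the constant ones. -/

open Set MeasureTheory RealInnerProductSpace

section QuadraticForm

variable {E : Type*} [NormedAddCommGroup E] [InnerProductSpace ℝ E]

theorem iInf_mul_norm_sq_add_inner_add {k : ℝ} (hk : 0 < k) (v : E) (m : ℝ) :
    ⨅ a : E, (k * ‖a‖ ^ 2 + ⟪a, v⟫ + m) = m - ‖v‖ ^ 2 / (4 * k) := by
  have key : ∀ a : E, 4 * k * (k * ‖a‖ ^ 2 + ⟪a, v⟫) + ‖v‖ ^ 2 = ‖(2 * k) • a + v‖ ^ 2 := by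
    intro a
    rw [norm_add_sq_real, norm_smul, real_inner_smul_left, Real.norm_of_nonneg (by positivity)]
    ring
  have lower : ∀ a : E, m - ‖v‖ ^ 2 / (4 * k) ≤ k * ‖a‖ ^ 2 + ⟪a, v⟫ + m := by
    intro a
    have : -(k * ‖a‖ ^ 2 + ⟪a, v⟫) ≤ ‖v‖ ^ 2 / (4 * k) := by
      rw [le_div_iff₀ (by positivity)]
      nlinarith [key a, sq_nonneg ‖(2 * k) • a + v‖]
    linarith
  refine le_antisymm ?_ (le_ciInf lower)
  set a₀ : E := -(2 * k)⁻¹ • v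
  have hval : k * ‖a₀‖ ^ 2 + ⟪a₀, v⟫ = -‖v‖ ^ 2 / (4 * k) := by
    have := key a₀
    rw [smul_smul, mul_neg, mul_inv_cancel₀ (by positivity), neg_one_smul, neg_add_cancel,
      norm_zero] at this
    rw [eq_div_iff (by positivity)]
    linarith
  refine (ciInf_le ⟨_, forall_mem_range.2 lower⟩ a₀).trans_eq ?_
  rw [hval]
  ring

theorem hasFDerivAt_mul_norm_sq_add_const (r c : ℝ) (y : E) :
    HasFDerivAt (fun x : E => r * ‖x‖ ^ 2 + c) ((2 * r) • innerSL ℝ y) y :=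
  (((hasStrictFDerivAt_norm_sq y).hasFDerivAt.const_mul r).add_const c).congr_fderiv <| by
    ext v
    simp
    ring

theorem fderiv_mul_norm_sq_add_const_apply (r c : ℝ) (y v : E) :
    fderiv ℝ (fun x : E => r * ‖x‖ ^ 2 + c) y v = 2 * r * ⟪y, v⟫ := by
  simp [(hasFDerivAt_mul_norm_sq_add_const r c y).fderiv]

theorem gradient_mul_norm_sq_add_const [CompleteSpace E] (r c : ℝ) (x : E) :
    gradient (fun x : E => r * ‖x‖ ^ 2 + c) x = (2 * r) • x := by
  refine HasGradientAt.gradient ?_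
  rw [hasGradientAt_iff_hasFDerivAt]
  refine (hasFDerivAt_mul_norm_sq_add_const r c x).congr_fderiv ?_
  ext v
  simp

theorem fderiv_fderiv_mul_norm_sq_add_const_apply (r c : ℝ) (x u w : E) :
    fderiv ℝ (fun y => fderiv ℝ (fun x : E => r * ‖x‖ ^ 2 + c) y w) x u = 2 * r * ⟪u, w⟫ := by
  have : (fun y => fderiv ℝ (fun x : E => r * ‖x‖ ^ 2 + c) y w) = ⇑((2 * r) • innerSL ℝ w) := by
    ext y
    rw [fderiv_mul_norm_sq_add_const_apply]
    simp [real_inner_comm]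
  rw [this, ContinuousLinearMap.fderiv]
  simp [real_inner_comm]

end QuadraticForm

theorem Matrix.sum_sum_mul_inner_single_single {ι : Type*} [Fintype ι] [DecidableEq ι]
    (M : Matrix ι ι ℝ) :
    ∑ i, ∑ j, M i j * ⟪EuclideanSpace.single i (1 : ℝ), EuclideanSpace.single j 1⟫ = M.trace := by
  simp [EuclideanSpace.inner_single_left, Matrix.trace]

theorem stmt_7_general (d : ℕ) (T c₁ c₂ ζ Λ₁ Λ₂ : ℝ) (hc₁ : 0 < c₁)
    (hζ : 0 ≤ ζ) (hΛ₂ : 0 ≤ Λ₂)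
    (Sig : Matrix (Fin d) (Fin d) ℝ)
    (h : ℝ → ℝ) (hC1 : ContDiff ℝ 1 h)
    (hpos : ∀ t ∈ Icc (0 : ℝ) T, 0 < h t)
    (hODE : ∀ t ∈ Icc (0 : ℝ) T,
        HasDerivAt h (h t ^ 2 / (2 * c₁ + h t * ζ * Λ₂)) t)
    (hterm : h T = 2 * c₂)
    (f : ℝ → ℝ)
    (hf : f = fun t => (1 / 2) * ((Sig * Sig.transpose).trace + Λ₁ * ζ) * ∫ s in t..T, h s)
    (V : ℝ → EuclideanSpace ℝ (Fin d) → ℝ)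
    (hV : V = fun t x => (1 / 2) * h t * ‖x‖ ^ 2 + f t) :
    (∀ t ∈ Ico (0 : ℝ) T, ∀ x : EuclideanSpace ℝ (Fin d),
      0 = deriv (fun s => V s x) t
        + (1 / 2) * ∑ i : Fin d, ∑ j : Fin d, (Sig * Sig.transpose) i j *
            (fderiv ℝ (fun y => fderiv ℝ (V t) y (EuclideanSpace.single j 1)) x)
              (EuclideanSpace.single i 1)
        + ⨅ a : EuclideanSpace ℝ (Fin d),
            (c₁ * ‖a‖ ^ 2 + (Λ₁ + Λ₂ * ‖a‖ ^ 2) * (h t * ζ / 2)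
              + inner ℝ a (gradient (V t) x)))
    ∧ ∀ x : EuclideanSpace ℝ (Fin d), V T x = c₂ * ‖x‖ ^ 2 := by
  subst hV
  beta_reduce
  refine ⟨fun t ht x => ?_, fun x => by simp [hf, hterm]⟩
  have hht : 0 < h t := hpos t (Ico_subset_Icc_self ht)
  have hk : 0 < c₁ + Λ₂ * (h t * ζ / 2) := by positivity
  have hf' : HasDerivAt f ((1 / 2) * ((Sig * Sig.transpose).trace + Λ₁ * ζ) * -h t) t := by
    have hcont := hC1.continuous
    subst hf
    exact (intervalIntegral.integral_hasDerivAt_left (hcont.intervalIntegrable t T)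
      (hcont.stronglyMeasurableAtFilter _ _) hcont.continuousAt).const_mul _
  have hinf : ⨅ a : EuclideanSpace ℝ (Fin d),
      (c₁ * ‖a‖ ^ 2 + (Λ₁ + Λ₂ * ‖a‖ ^ 2) * (h t * ζ / 2) + ⟪a, (2 * (1 / 2 * h t)) • x⟫)
        = Λ₁ * (h t * ζ / 2) - ‖(2 * (1 / 2 * h t)) • x‖ ^ 2 / (4 * (c₁ + Λ₂ * (h t * ζ / 2))) := by
    rw [← iInf_mul_norm_sq_add_inner_add hk]
    congr 1 with a
    ring
  have hV' : HasDerivAt (fun s => 1 / 2 * h s * ‖x‖ ^ 2 + f s) _ t :=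
    (((hODE t (Ico_subset_Icc_self ht)).const_mul (1 / 2)).mul_const (‖x‖ ^ 2)).add hf'
  rw [hV'.deriv]
  simp only [fderiv_fderiv_mul_norm_sq_add_const_apply, gradient_mul_norm_sq_add_const, hinf,
    mul_left_comm _ (2 * (1 / 2 * h t)), ← Finset.mul_sum, Matrix.sum_sum_mul_inner_single_single,
    norm_smul, mul_pow, Real.norm_eq_abs, sq_abs]
  field_simp
  ring

/-- Verification: the quadratic ansatz V(t,x) = (1/2)h(t)‖x‖² + f(t) solves the HJB equation of
the jump-LQR problem with controlled intensity, with terminal condition V(T,x) = c₂‖x‖². -/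
theorem stmt_7 (d : ℕ) (T c₁ c₂ ζ Λ₁ Λ₂ : ℝ) (hT : 0 < T) (hc₁ : 0 < c₁) (hc₂ : 0 < c₂)
    (hζ : 0 ≤ ζ) (hΛ₁ : 0 ≤ Λ₁) (hΛ₂ : 0 ≤ Λ₂)
    (Sig : Matrix (Fin d) (Fin d) ℝ)
    (h : ℝ → ℝ) (hC1 : ContDiff ℝ 1 h)
    (hpos : ∀ t ∈ Icc (0 : ℝ) T, 0 < h t)
    (hODE : ∀ t ∈ Icc (0 : ℝ) T,
        HasDerivAt h (h t ^ 2 / (2 * c₁ + h t * ζ * Λ₂)) t)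
    (hterm : h T = 2 * c₂)
    (f : ℝ → ℝ)
    (hf : f = fun t => (1 / 2) * ((Sig * Sig.transpose).trace + Λ₁ * ζ) * ∫ s in t..T, h s)
    (V : ℝ → EuclideanSpace ℝ (Fin d) → ℝ)
    (hV : V = fun t x => (1 / 2) * h t * ‖x‖ ^ 2 + f t) :
    (∀ t ∈ Ico (0 : ℝ) T, ∀ x : EuclideanSpace ℝ (Fin d),
      0 = deriv (fun s => V s x) t
        + (1 / 2) * ∑ i : Fin d, ∑ j : Fin d, (Sig * Sig.transpose) i j *
            (fderiv ℝ (fun y => fderiv ℝ (V t) y (EuclideanSpace.single j 1)) x)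
              (EuclideanSpace.single i 1)
        + ⨅ a : EuclideanSpace ℝ (Fin d),
            (c₁ * ‖a‖ ^ 2 + (Λ₁ + Λ₂ * ‖a‖ ^ 2) * (h t * ζ / 2)
              + inner ℝ a (gradient (V t) x)))
    ∧ ∀ x : EuclideanSpace ℝ (Fin d), V T x = c₂ * ‖x‖ ^ 2 :=
  stmt_7_general d T c₁ c₂ ζ Λ₁ Λ₂ hc₁ hζ hΛ₂ Sig h hC1 hpos hODE hterm f hf V hV
end
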